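/- Acoustical wave equation for the squared enthalpy of a barotropic fluid (eq:sigmagen): let V : ℝ⁴ → ℝ⁴ be a smooth vector field, G : ℝ → ℝ a smooth function, and set s := −V_μ V^μ. Suppose the continuity equation ∂_μ(G(s) V^μ) = 0 and the Euler equation V^μ ∂_μ V_α + (1/2) ∂_α s = 0 (for every α) hold on ℝ⁴. Define h^{μν} := G(s) m^{μν} − 2 G′(s) V^μ V^ν and ω_{μν} := ∂_μ V_ν − ∂_ν V_μ. Then at every point of ℝ⁴ one has ∂_μ( h^{μν} ∂_ν s ) = 2 G(s) (∂^μ V^ν) ω_{μν} − 2 h^{μν} (∂_μ V^λ)(∂_ν V_λ), with repeated Greek indices summed over {0,1,2,3} and raised/lowered with the Minkowski metric. -/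

import Mathlib

open scoped BigOperators

noncomputable section

/-- Partial derivative `∂_μ` of a real-valued function on `ℝ⁴`. -/
def pd (μ : Fin 4) (f : (Fin 4 → ℝ) → ℝ) : (Fin 4 → ℝ) → ℝ :=
  fun x => fderiv ℝ f x (Pi.single μ 1)

/-- Minkowski metric signs: `msign 0 = −1`, `msign i = 1` for `i = 1,2,3`. -/
def msign (μ : Fin 4) : ℝ := if μ = 0 then -1 else 1

/-- Derivative along the vector field `V` : `D_V f = V^μ ∂_μ f`. -/
def DV (V : (Fin 4 → ℝ) → Fin 4 → ℝ) (f : (Fin 4 → ℝ) → ℝ) : (Fin 4 → ℝ) → ℝ :=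
  fun x => ∑ μ : Fin 4, V x μ * pd μ f x

/-- The d'Alembertian `□f = −∂₀²f + Σᵢ ∂ᵢ²f = m^{μν} ∂_μ∂_ν f`. -/
def dAl (f : (Fin 4 → ℝ) → ℝ) : (Fin 4 → ℝ) → ℝ :=
  fun x => ∑ μ : Fin 4, msign μ * pd μ (pd μ f) x

lemma cdAt {f : (Fin 4 → ℝ) → ℝ} (h : ContDiff ℝ (⊤ : ℕ∞) f) (x : Fin 4 → ℝ) :
    DifferentiableAt ℝ f x := (h.differentiable (by simp)) x

lemma pd_const (μ : Fin 4) (c : ℝ) (x : Fin 4 → ℝ) : pd μ (fun _ => c) x = 0 := by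
  simp [pd]

lemma pd_add {f g : (Fin 4 → ℝ) → ℝ} {x : Fin 4 → ℝ} (μ : Fin 4)
    (hf : DifferentiableAt ℝ f x) (hg : DifferentiableAt ℝ g x) :
    pd μ (fun y => f y + g y) x = pd μ f x + pd μ g x := by
  simp [pd, fderiv_fun_add hf hg]

lemma pd_sub {f g : (Fin 4 → ℝ) → ℝ} {x : Fin 4 → ℝ} (μ : Fin 4)
    (hf : DifferentiableAt ℝ f x) (hg : DifferentiableAt ℝ g x) :
    pd μ (fun y => f y - g y) x = pd μ f x - pd μ g x := by
  simp [pd, fderiv_fun_sub hf hg]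

lemma pd_neg {f : (Fin 4 → ℝ) → ℝ} {x : Fin 4 → ℝ} (μ : Fin 4) :
    pd μ (fun y => -f y) x = -pd μ f x := by
  simp [pd, fderiv_neg]

lemma pd_sum {f : Fin 4 → (Fin 4 → ℝ) → ℝ} {x : Fin 4 → ℝ} (μ : Fin 4)
    (hf : ∀ i, DifferentiableAt ℝ (f i) x) :
    pd μ (fun y => ∑ i : Fin 4, f i y) x = ∑ i : Fin 4, pd μ (f i) x := by
  simp [pd, fderiv_fun_sum (fun i _ => hf i)]

lemma pd_mul {f g : (Fin 4 → ℝ) → ℝ} {x : Fin 4 → ℝ} (μ : Fin 4)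
    (hf : DifferentiableAt ℝ f x) (hg : DifferentiableAt ℝ g x) :
    pd μ (fun y => f y * g y) x = pd μ f x * g x + f x * pd μ g x := by
  simp [pd, fderiv_fun_mul hf hg]; ring

lemma pd_const_mul {f : (Fin 4 → ℝ) → ℝ} {x : Fin 4 → ℝ} (μ : Fin 4) (c : ℝ)
    (hf : DifferentiableAt ℝ f x) :
    pd μ (fun y => c * f y) x = c * pd μ f x := by
  simp [pd, fderiv_const_mul hf]

lemma pd_mul_const {f : (Fin 4 → ℝ) → ℝ} {x : Fin 4 → ℝ} (μ : Fin 4) (c : ℝ)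
    (hf : DifferentiableAt ℝ f x) :
    pd μ (fun y => f y * c) x = pd μ f x * c := by
  simp [pd, fderiv_mul_const hf]; ring

lemma pd_comp {F : ℝ → ℝ} {f : (Fin 4 → ℝ) → ℝ} {x : Fin 4 → ℝ} (μ : Fin 4)
    (hF : DifferentiableAt ℝ F (f x)) (hf : DifferentiableAt ℝ f x) :
    pd μ (fun y => F (f y)) x = deriv F (f x) * pd μ f x := by
  have : pd μ (fun y => F (f y)) x = (fderiv ℝ F (f x)).comp (fderiv ℝ f x) (Pi.single μ 1) := by
    simp only [pd]
    rw [show (fun y => F (f y)) = F ∘ f from rfl, fderiv_comp x hF hf]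
  rw [this]
  simp only [ContinuousLinearMap.comp_apply]
  rw [show fderiv ℝ f x (Pi.single μ 1) = (fderiv ℝ f x (Pi.single μ 1)) • (1:ℝ) by simp,
    ContinuousLinearMap.map_smul]
  simp [fderiv_apply_one_eq_deriv, pd, mul_comm]

lemma contDiff_pd {f : (Fin 4 → ℝ) → ℝ} (μ : Fin 4) (hf : ContDiff ℝ (⊤ : ℕ∞) f) :
    ContDiff ℝ (⊤ : ℕ∞) (pd μ f) :=
  (hf.fderiv_right (by simp)).clm_apply contDiff_const

lemma contDiff_deriv {F : ℝ → ℝ} (hF : ContDiff ℝ (⊤ : ℕ∞) F) : ContDiff ℝ (⊤ : ℕ∞) (deriv F) := by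
  have h : ContDiff ℝ (⊤ : ℕ∞) fun t => fderiv ℝ F t (1:ℝ) :=
    (hF.fderiv_right (by simp)).clm_apply contDiff_const
  have : deriv F = fun t => fderiv ℝ F t (1:ℝ) := by
    funext t; rw [fderiv_apply_one_eq_deriv]
  rw [this]; exact h

lemma pd_comm {f : (Fin 4 → ℝ) → ℝ} (μ ν : Fin 4) (hf : ContDiff ℝ (⊤ : ℕ∞) f) (x : Fin 4 → ℝ) :
    pd μ (pd ν f) x = pd ν (pd μ f) x := by
  have hsymm : IsSymmSndFDerivAt ℝ f x :=
    (hf.contDiffAt).isSymmSndFDerivAt (by rw [minSmoothness_of_isRCLikeNormedField]; exact WithTop.coe_le_coe.mpr (le_top : (2 : ℕ∞) ≤ ⊤))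
  have hd : DifferentiableAt ℝ (fderiv ℝ f) x :=
    ((hf.fderiv_right (m := 1) (by exact WithTop.coe_le_coe.mpr le_top)).differentiable one_ne_zero) x
  have expand : ∀ (w v : Fin 4 → ℝ),
      fderiv ℝ (fun y => fderiv ℝ f y v) x w = fderiv ℝ (fderiv ℝ f) x w v := by
    intro w v
    rw [show (fun y => fderiv ℝ f y v) = fun y => (fderiv ℝ f y) ((fun _ => v) y) from rfl,
      fderiv_clm_apply hd (differentiableAt_const v)]
    simp
  unfold pd
  rw [expand, expand]
  exact hsymm _ _

lemma msign0 : msign 0 = -1 := rfl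
lemma msign1 : msign 1 = 1 := rfl
lemma msign2 : msign 2 = 1 := rfl
lemma msign3 : msign 3 = 1 := rfl

set_option maxHeartbeats 2000000 in
/-- Acoustical wave equation for the squared enthalpy of a barotropic fluid
(eq:sigmagen): under the continuity and Euler equations, with
`h^{μν} := G(s)m^{μν} − 2G′(s)V^μV^ν` and `ω_{μν} := ∂_μV_ν − ∂_νV_μ`,
`∂_μ(h^{μν}∂_νs) = 2G(s)(∂^μV^ν)ω_{μν} − 2h^{μν}(∂_μV^λ)(∂_νV_λ)`. -/
theorem acoustical_wave_enthalpy
    (V : (Fin 4 → ℝ) → Fin 4 → ℝ) (hV : ContDiff ℝ (⊤ : ℕ∞) V)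
    (G : ℝ → ℝ) (hG : ContDiff ℝ (⊤ : ℕ∞) G)
    (s : (Fin 4 → ℝ) → ℝ)
    (hs : s = fun y => -∑ μ : Fin 4, msign μ * V y μ * V y μ)
    (h : Fin 4 → Fin 4 → (Fin 4 → ℝ) → ℝ)
    (hh : ∀ μ ν : Fin 4, h μ ν = fun y =>
      G (s y) * (if μ = ν then msign μ else 0) - 2 * deriv G (s y) * V y μ * V y ν)
    (ω : Fin 4 → Fin 4 → (Fin 4 → ℝ) → ℝ)
    (hω : ∀ μ ν : Fin 4, ω μ ν = fun y =>
      pd μ (fun z => msign ν * V z ν) y - pd ν (fun z => msign μ * V z μ) y)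
    (hcont : ∀ x : Fin 4 → ℝ,
      ∑ μ : Fin 4, pd μ (fun y => G (s y) * V y μ) x = 0)
    (heuler : ∀ (α : Fin 4) (x : Fin 4 → ℝ),
      (∑ μ : Fin 4, V x μ * pd μ (fun y => msign α * V y α) x)
        + (1 / 2) * pd α s x = 0)
    (x : Fin 4 → ℝ) :
    (∑ μ : Fin 4, pd μ (fun y => ∑ ν : Fin 4, h μ ν y * pd ν s y) x)
      = 2 * G (s x) * (∑ μ : Fin 4, ∑ ν : Fin 4,
          (msign μ * pd μ (fun y => V y ν) x) * ω μ ν x)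
        - 2 * ∑ μ : Fin 4, ∑ ν : Fin 4, h μ ν x *
            (∑ lam : Fin 4, pd μ (fun y => V y lam) x
              * (msign lam * pd ν (fun y => V y lam) x)) := by
  -- basic smoothness facts
  have hWc : ∀ i : Fin 4, ContDiff ℝ (⊤ : ℕ∞) (fun y => V y i) := fun i => contDiff_pi.mp hV i
  have hsm : ContDiff ℝ (⊤ : ℕ∞) s := by
    rw [hs]; exact (ContDiff.sum fun i _ => (contDiff_const.mul (hWc i)).mul (hWc i)).neg
  have hGs : ContDiff ℝ (⊤ : ℕ∞) (fun y => G (s y)) := hG.comp hsm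
  have hG1 : ContDiff ℝ (⊤ : ℕ∞) (deriv G) := contDiff_deriv hG
  have hG1s : ContDiff ℝ (⊤ : ℕ∞) (fun y => deriv G (s y)) := hG1.comp hsm
  have hpW : ∀ ν i : Fin 4, ContDiff ℝ (⊤ : ℕ∞) (pd ν (fun y => V y i)) :=
    fun ν i => contDiff_pd ν (hWc i)
  have hpsC : ∀ ν : Fin 4, ContDiff ℝ (⊤ : ℕ∞) (pd ν s) := fun ν => contDiff_pd ν hsm
  -- first derivative of s, as a function
  have hps : ∀ ν : Fin 4, pd ν s
      = fun y => ∑ l : Fin 4, (-2 * msign l) * (V y l * pd ν (fun z => V z l) y) := by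
    intro ν; funext y
    conv_lhs => rw [hs]
    rw [pd_neg, pd_sum ν (fun i => cdAt ((contDiff_const.mul (hWc i)).mul (hWc i)) y)]
    have hterm : ∀ i : Fin 4, pd ν (fun z => msign i * V z i * V z i) y
        = msign i * pd ν (fun z => V z i) y * V y i
          + msign i * V y i * pd ν (fun z => V z i) y := by
      intro i
      rw [pd_mul ν (cdAt (contDiff_const.mul (hWc i)) y) (cdAt (hWc i) y),
        pd_const_mul ν _ (cdAt (hWc i) y)]
    rw [← Finset.sum_neg_distrib]
    exact Finset.sum_congr rfl (fun i _ => by rw [hterm i]; ring)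
  have hpsx : ∀ ν : Fin 4, pd ν s x
      = ∑ l : Fin 4, (-2 * msign l) * (V x l * pd ν (fun z => V z l) x) :=
    fun ν => by rw [hps ν]
  -- second derivatives of s
  have hp2s : ∀ μ ν : Fin 4, pd μ (pd ν s) x
      = ∑ l : Fin 4, (-2 * msign l) * (pd μ (fun z => V z l) x * pd ν (fun z => V z l) x
          + V x l * pd μ (pd ν (fun z => V z l)) x) := by
    intro μ ν
    rw [hps ν, pd_sum μ (fun l => cdAt (contDiff_const.mul ((hWc l).mul (hpW ν l))) x)]
    refine Finset.sum_congr rfl (fun l _ => ?_)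
    rw [pd_const_mul μ _ (cdAt ((hWc l).mul (hpW ν l)) x),
      pd_mul μ (cdAt (hWc l) x) (cdAt (hpW ν l) x)]
  -- Euler in clean form, as a function identity
  have heul : ∀ α : Fin 4,
      (fun y => (∑ μ : Fin 4, V y μ * (msign α * pd μ (fun z => V z α) y))
        + (1 / 2) * pd α s y) = (fun _ => (0 : ℝ)) := by
    intro α; funext y
    have h1 := heuler α y
    have h2 : ∀ μ : Fin 4, pd μ (fun z => msign α * V z α) y
        = msign α * pd μ (fun z => V z α) y :=
      fun μ => pd_const_mul μ _ (cdAt (hWc α) y)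
    simp only [h2] at h1
    exact h1
  have hE : ∀ α : Fin 4,
      (∑ μ : Fin 4, V x μ * (msign α * pd μ (fun z => V z α) x))
        + (1 / 2) * pd α s x = 0 := fun α => congrFun (heul α) x
  -- derivative of the Euler equation
  have hdE : ∀ α : Fin 4,
      (∑ μ : Fin 4, (pd α (fun z => V z μ) x * (msign α * pd μ (fun z => V z α) x)
        + V x μ * (msign α * pd α (pd μ (fun z => V z α)) x)))
        + (1 / 2) * pd α (pd α s) x = 0 := by
    intro α
    have h0 : pd α (fun y => (∑ μ : Fin 4, V y μ * (msign α * pd μ (fun z => V z α) y))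
        + (1 / 2) * pd α s y) x = 0 := by
      rw [heul α]; exact pd_const α 0 x
    rw [pd_add α
        (cdAt (ContDiff.sum fun μ _ => (hWc μ).mul (contDiff_const.mul (hpW μ α))) x)
        (cdAt (contDiff_const.mul (hpsC α)) x),
      pd_sum α (fun μ => cdAt ((hWc μ).mul (contDiff_const.mul (hpW μ α))) x),
      pd_const_mul α _ (cdAt (hpsC α) x)] at h0
    have hterm : ∀ μ : Fin 4, pd α (fun y => V y μ * (msign α * pd μ (fun z => V z α) y)) x
        = pd α (fun z => V z μ) x * (msign α * pd μ (fun z => V z α) x)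
          + V x μ * (msign α * pd α (pd μ (fun z => V z α)) x) := by
      intro μ
      rw [pd_mul α (cdAt (hWc μ) x) (cdAt (contDiff_const.mul (hpW μ α)) x),
        pd_const_mul α _ (cdAt (hpW μ α) x)]
    simp only [hterm] at h0
    exact h0
  -- continuity in clean form
  have hcont' : ∀ y : Fin 4 → ℝ,
      (∑ μ : Fin 4, (deriv G (s y) * pd μ s y * V y μ
        + G (s y) * pd μ (fun z => V z μ) y)) = 0 := by
    intro y
    have h1 := hcont y
    have h2 : ∀ μ : Fin 4, pd μ (fun z => G (s z) * V z μ) y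
        = deriv G (s y) * pd μ s y * V y μ + G (s y) * pd μ (fun z => V z μ) y := by
      intro μ
      rw [pd_mul μ (cdAt hGs y) (cdAt (hWc μ) y),
        pd_comp μ ((hG.differentiable (by simp)) (s y)) (cdAt hsm y)]
    simp only [h2] at h1
    exact h1
  have hcfun : (fun y => ∑ μ : Fin 4, (deriv G (s y) * pd μ s y * V y μ
      + G (s y) * pd μ (fun z => V z μ) y)) = (fun _ => (0 : ℝ)) := funext hcont'
  -- derivative of the continuity equation
  have hCn : ∀ ν : Fin 4,
      (∑ μ : Fin 4, (deriv (deriv G) (s x) * pd ν s x * pd μ s x * V x μ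
        + deriv G (s x) * pd ν (pd μ s) x * V x μ
        + deriv G (s x) * pd μ s x * pd ν (fun z => V z μ) x
        + deriv G (s x) * pd ν s x * pd μ (fun z => V z μ) x
        + G (s x) * pd ν (pd μ (fun z => V z μ)) x)) = 0 := by
    intro ν
    have h0 : pd ν (fun y => ∑ μ : Fin 4, (deriv G (s y) * pd μ s y * V y μ
        + G (s y) * pd μ (fun z => V z μ) y)) x = 0 := by
      rw [hcfun]; exact pd_const ν 0 x
    rw [pd_sum ν (fun μ =>
      cdAt (((hG1s.mul (hpsC μ)).mul (hWc μ)).add (hGs.mul (hpW μ μ))) x)] at h0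
    have hterm : ∀ μ : Fin 4, pd ν (fun y => deriv G (s y) * pd μ s y * V y μ
        + G (s y) * pd μ (fun z => V z μ) y) x
        = deriv (deriv G) (s x) * pd ν s x * pd μ s x * V x μ
          + deriv G (s x) * pd ν (pd μ s) x * V x μ
          + deriv G (s x) * pd μ s x * pd ν (fun z => V z μ) x
          + deriv G (s x) * pd ν s x * pd μ (fun z => V z μ) x
          + G (s x) * pd ν (pd μ (fun z => V z μ)) x := by
      intro μ
      rw [pd_add ν (cdAt ((hG1s.mul (hpsC μ)).mul (hWc μ)) x) (cdAt (hGs.mul (hpW μ μ)) x),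
        pd_mul ν (cdAt (hG1s.mul (hpsC μ)) x) (cdAt (hWc μ) x),
        pd_mul ν (cdAt hG1s x) (cdAt (hpsC μ) x),
        pd_comp ν ((hG1.differentiable (by simp)) (s x)) (cdAt hsm x),
        pd_mul ν (cdAt hGs x) (cdAt (hpW μ μ) x),
        pd_comp ν ((hG.differentiable (by simp)) (s x)) (cdAt hsm x)]
      ring
    simp only [hterm] at h0
    exact h0
  -- expansion of the divergence on the left-hand side of the goal
  have hhC : ∀ μ ν : Fin 4, ContDiff ℝ (⊤ : ℕ∞) (h μ ν) := by
    intro μ ν; rw [hh]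
    exact (hGs.mul contDiff_const).sub
      (((contDiff_const.mul hG1s).mul (hWc μ)).mul (hWc ν))
  have hgoal1 : ∀ μ : Fin 4, pd μ (fun y => ∑ ν : Fin 4, h μ ν y * pd ν s y) x
      = ∑ ν : Fin 4, pd μ (fun y => h μ ν y * pd ν s y) x :=
    fun μ => pd_sum μ (fun ν => cdAt ((hhC μ ν).mul (hpsC ν)) x)
  have hgoal2 : ∀ μ ν : Fin 4, pd μ (fun y => h μ ν y * pd ν s y) x
      = pd μ (h μ ν) x * pd ν s x + h μ ν x * pd μ (pd ν s) x :=
    fun μ ν => pd_mul μ (cdAt (hhC μ ν) x) (cdAt (hpsC ν) x)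
  have hpdh : ∀ μ ν : Fin 4, pd μ (h μ ν) x
      = deriv G (s x) * pd μ s x * (if μ = ν then msign μ else 0)
        - 2 * (deriv (deriv G) (s x) * pd μ s x * V x μ * V x ν
          + deriv G (s x) * pd μ (fun z => V z μ) x * V x ν
          + deriv G (s x) * V x μ * pd μ (fun z => V z ν) x) := by
    intro μ ν
    conv_lhs => rw [hh μ ν]
    rw [pd_sub μ (cdAt (hGs.mul contDiff_const) x)
        (cdAt (((contDiff_const.mul hG1s).mul (hWc μ)).mul (hWc ν)) x),
      pd_mul_const μ _ (cdAt hGs x),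
      pd_comp μ ((hG.differentiable (by simp)) (s x)) (cdAt hsm x),
      pd_mul μ (cdAt ((contDiff_const.mul hG1s).mul (hWc μ)) x) (cdAt (hWc ν) x),
      pd_mul μ (cdAt (contDiff_const.mul hG1s) x) (cdAt (hWc μ) x),
      pd_const_mul μ _ (cdAt hG1s x),
      pd_comp μ ((hG1.differentiable (by simp)) (s x)) (cdAt hsm x)]
    ring
  have hpcm : ∀ μ ν : Fin 4, pd μ (fun z => msign ν * V z ν) x
      = msign ν * pd μ (fun z => V z ν) x :=
    fun μ ν => pd_const_mul μ _ (cdAt (hWc ν) x)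
  have hbsym : ∀ μ ν l : Fin 4, pd μ (pd ν (fun z => V z l)) x
      = pd ν (pd μ (fun z => V z l)) x := fun μ ν l => pd_comm μ ν (hWc l) x
  -- rewrite the goal into atoms
  simp only [hgoal1]
  simp only [hgoal2]
  simp only [hpdh]
  simp only [hp2s, hω, hpcm, hh, hpsx]
  -- put the hypotheses into atoms
  have he0 := hE 0; have he1 := hE 1; have he2 := hE 2; have he3 := hE 3
  have hc0 := hCn 0; have hc1 := hCn 1; have hc2 := hCn 2; have hc3 := hCn 3
  have hd0 := hdE 0; have hd1 := hdE 1; have hd2 := hdE 2; have hd3 := hdE 3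
  simp only [hp2s, hpsx] at he0 he1 he2 he3 hc0 hc1 hc2 hc3 hd0 hd1 hd2 hd3
  simp only [Fin.sum_univ_four] at he0 he1 he2 he3 hc0 hc1 hc2 hc3 hd0 hd1 hd2 hd3 ⊢
  simp only [msign0, msign1, msign2, msign3, Fin.reduceEq, reduceIte, if_true]
    at he0 he1 he2 he3 hc0 hc1 hc2 hc3 hd0 hd1 hd2 hd3 ⊢
  simp only [hbsym 1 0, hbsym 2 0, hbsym 2 1, hbsym 3 0, hbsym 3 1, hbsym 3 2]
    at hc0 hc1 hc2 hc3 hd0 hd1 hd2 hd3 ⊢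
  linear_combination (norm := ring1)
    (2 * (deriv G (s x)) * (-1) * (((-2) * ((-1) * V x 0 * (pd 0 (fun z => V z 0) x) + (1) * V x 1 * (pd 0 (fun z => V z 1) x) + (1) * V x 2 * (pd 0 (fun z => V z 2) x) + (1) * V x 3 * (pd 0 (fun z => V z 3) x))) - 2 * (V x 0 * (-1) * (pd 0 (fun z => V z 0) x) + V x 1 * (-1) * (pd 1 (fun z => V z 0) x) + V x 2 * (-1) * (pd 2 (fun z => V z 0) x) + V x 3 * (-1) * (pd 3 (fun z => V z 0) x)))) * he0
    + (2 * (deriv G (s x)) * (1) * (((-2) * ((-1) * V x 0 * (pd 1 (fun z => V z 0) x) + (1) * V x 1 * (pd 1 (fun z => V z 1) x) + (1) * V x 2 * (pd 1 (fun z => V z 2) x) + (1) * V x 3 * (pd 1 (fun z => V z 3) x))) - 2 * (V x 0 * (1) * (pd 0 (fun z => V z 1) x) + V x 1 * (1) * (pd 1 (fun z => V z 1) x) + V x 2 * (1) * (pd 2 (fun z => V z 1) x) + V x 3 * (1) * (pd 3 (fun z => V z 1) x)))) * he1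
    + (2 * (deriv G (s x)) * (1) * (((-2) * ((-1) * V x 0 * (pd 2 (fun z => V z 0) x) + (1) * V x 1 * (pd 2 (fun z => V z 1) x) + (1) * V x 2 * (pd 2 (fun z => V z 2) x) + (1) * V x 3 * (pd 2 (fun z => V z 3) x))) - 2 * (V x 0 * (1) * (pd 0 (fun z => V z 2) x) + V x 1 * (1) * (pd 1 (fun z => V z 2) x) + V x 2 * (1) * (pd 2 (fun z => V z 2) x) + V x 3 * (1) * (pd 3 (fun z => V z 2) x)))) * he2
    + (2 * (deriv G (s x)) * (1) * (((-2) * ((-1) * V x 0 * (pd 3 (fun z => V z 0) x) + (1) * V x 1 * (pd 3 (fun z => V z 1) x) + (1) * V x 2 * (pd 3 (fun z => V z 2) x) + (1) * V x 3 * (pd 3 (fun z => V z 3) x))) - 2 * (V x 0 * (1) * (pd 0 (fun z => V z 3) x) + V x 1 * (1) * (pd 1 (fun z => V z 3) x) + V x 2 * (1) * (pd 2 (fun z => V z 3) x) + V x 3 * (1) * (pd 3 (fun z => V z 3) x)))) * he3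
    + (-2 * V x 0) * hc0
    + (-2 * V x 1) * hc1
    + (-2 * V x 2) * hc2
    + (-2 * V x 3) * hc3
    + (2 * (G (s x)) * (-1)) * hd0
    + (2 * (G (s x)) * (1)) * hd1
    + (2 * (G (s x)) * (1)) * hd2
    + (2 * (G (s x)) * (1)) * hd3
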